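/- Let p be a prime, let A be a commutative ring that is an algebra over the p-adic integers ℤ_p, and let π ∈ A satisfy π^{p−1} ∈ p·A. Let n ≥ 1, let k = (k_1, …, k_n) ∈ ℕⁿ with k ≠ (0,…,0), let |k| = k_1 + ⋯ + k_n, and let 1 ≤ i ≤ n. Then for every a ∈ K^i(k, A) with d a = 0 there exists b ∈ K^{i−1}(k, A) with d b = π^{|k|} • a. (This expresses, in monomial weight k, the vanishing of the transition maps H^i_dR(R^+_{α+1}) → H^i_dR(R^+_α), i ≥ 1, in Lemma 2.3 (Lemma AFF3) of the paper: the substitution T_j ↦ π T_j multiplies the weight-k component of an i-form by π^{|k|}, and the resulting closed form becomes exact.) -/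
import Mathlib


lemma padic_unit_nat (p : ℕ) [hp : Fact p.Prime] {m : ℕ} (hm : ¬ p ∣ m) :
    IsUnit (m : ℤ_[p]) := by
  rw [PadicInt.isUnit_iff]
  have h1 : ‖((m : ℤ) : ℤ_[p])‖ ≤ 1 := PadicInt.norm_le_one _
  have h2 : ¬ ‖((m : ℤ) : ℤ_[p])‖ < 1 := by
    rw [PadicInt.norm_int_lt_one_iff_dvd]
    exact_mod_cast hm
  push_cast at h1 h2 ⊢
  linarith

lemma arith_lemma (p : ℕ) [hp : Fact p.Prime] (A : Type*) [CommRing A] [Algebra ℤ_[p] A]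
    (π : A) (hπ : ∃ c : A, π ^ (p - 1) = (p : A) * c)
    {K m : ℕ} (hm : m ≠ 0) (hmK : m ≤ K) :
    ∃ x : A, π ^ K = (m : A) * x := by
  obtain ⟨c, hc⟩ := hπ
  set v := m.factorization p with hv
  have hnd : ¬ p ∣ m / p ^ v := Nat.not_dvd_ordCompl hp.out hm
  have hsplit : p ^ v * (m / p ^ v) = m := Nat.ordProj_mul_ordCompl_eq_self m p
  have hple : p ^ v ≤ m := Nat.ordProj_le p hm
  have hp1 : 1 ≤ p := hp.out.one_lt.le
  have hexp : (p - 1) * v ≤ K := by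
    have := one_add_mul_le_pow (a := (p : ℤ) - 1) (by omega) v
    have hpv : (1 : ℤ) + v * ((p : ℤ) - 1) ≤ (p : ℤ) ^ v := by simpa using this
    have hcast : ((p : ℤ) ^ v) ≤ (m : ℤ) := by exact_mod_cast hple
    have hK : (m : ℤ) ≤ K := by exact_mod_cast hmK
    zify [hp1]
    nlinarith [hpv, hcast, hK]
  obtain ⟨u, hu⟩ := IsUnit.exists_right_inv
    ((padic_unit_nat p hnd).map (algebraMap ℤ_[p] A))
  rw [map_natCast] at hu
  refine ⟨u * c ^ v * π ^ (K - (p - 1) * v), ?_⟩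
  have hπv : π ^ ((p - 1) * v) = (p : A) ^ v * c ^ v := by
    rw [pow_mul, hc, mul_pow]
  have hmA : (m : A) = (p : A) ^ v * ((m / p ^ v : ℕ) : A) := by
    conv_lhs => rw [← hsplit]
    push_cast
    ring
  calc π ^ K = π ^ ((p - 1) * v) * π ^ (K - (p - 1) * v) := by
        rw [← pow_add]; congr 1; omega
    _ = (m : A) * (u * c ^ v * π ^ (K - (p - 1) * v)) := by
        rw [hπv, hmA]
        calc (p:A)^v * c^v * π ^ (K - (p-1)*v)
            = (p:A)^v * (((m / p ^ v : ℕ) : A) * u) * c^v * π ^ (K - (p-1)*v) := by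
              rw [hu]; ring
          _ = _ := by ring


/-- The degree-`i` part of the weight-`k` monomial piece of the de Rham complex of the
polynomial ring in `n` variables: families indexed by `i`-element subsets of `Fin n`. -/
abbrev Kform (n i : ℕ) (M : Type*) : Type _ :=
  {s : Finset (Fin n) // s.card = i} → M

/-- The differential of the weight-`k` monomial complex:
`(d a)_L = ∑ₜ (−1)ᵗ · k_{lₜ} • a_{L ∖ {lₜ}}` for `L = {l₀ < l₁ < ⋯ < lᵢ}`. -/
noncomputable def Kd {n : ℕ} {M : Type*} [AddCommGroup M] (k : Fin n → ℕ) {i : ℕ}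
    (a : Kform n i M) : Kform n (i + 1) M := fun L =>
  ∑ j ∈ L.1.attach,
    ((-1 : ℤ) ^ (L.1.filter (fun x => x < j.1)).card * (k j.1 : ℤ)) •
      a ⟨L.1.erase j.1, by rw [Finset.card_erase_of_mem j.2, L.2]; rfl⟩

lemma Kd_apply {n : ℕ} {M : Type*} [AddCommGroup M] (k : Fin n → ℕ) {i : ℕ}
    (a : Kform n i M) (L : {s : Finset (Fin n) // s.card = i + 1}) :
    Kd k a L = ∑ l ∈ L.1,
      ((-1 : ℤ) ^ (L.1.filter (fun x => x < l)).card * (k l : ℤ)) •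
        (if h : l ∈ L.1 then
          a ⟨L.1.erase l, by rw [Finset.card_erase_of_mem h, L.2]; rfl⟩ else 0) := by
  rw [← Finset.sum_attach L.1 (fun l => ((-1 : ℤ) ^ (L.1.filter (fun x => x < l)).card * (k l : ℤ)) •
        (if h : l ∈ L.1 then
          a ⟨L.1.erase l, by rw [Finset.card_erase_of_mem h, L.2]; rfl⟩ else 0))]
  unfold Kd
  exact Finset.sum_congr rfl fun j _ => by rw [dif_pos j.2]

/-- vanishing of the transition maps `H^i_dR(R^+_{α+1}) → H^i_dR(R^+_α)`, `i ≥ 1`,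
from Lemma 2.3 of the paper, in monomial weight `k`: if `A` is a `ℤ_p`-algebra and `π ∈ A`
satisfies `π^{p−1} ∈ p·A`, then every closed `a ∈ K^i(k, A)` with `k ≠ 0` becomes exact after
multiplication by `π^{|k|}`. -/
theorem statement5 (p : ℕ) [Fact p.Prime] (A : Type*) [CommRing A] [Algebra ℤ_[p] A]
    (π : A) (hπ : ∃ c : A, π ^ (p - 1) = (p : A) * c)
    (n : ℕ) (hn : 1 ≤ n) (k : Fin n → ℕ) (hk : k ≠ 0)
    (i : ℕ) (hi : i + 1 ≤ n)
    (a : Kform n (i + 1) A) (ha : Kd k a = 0) :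
    ∃ b : Kform n i A, Kd k b = fun L => π ^ (∑ j, k j) * a L := by
  obtain ⟨j, hj⟩ := Function.ne_iff.mp hk
  have hj' : k j ≠ 0 := hj
  have hmK : k j ≤ ∑ j', k j' :=
    Finset.single_le_sum (fun _ _ => Nat.zero_le _) (Finset.mem_univ j)
  obtain ⟨x, hx⟩ := arith_lemma p A π hπ hj' hmK
  refine ⟨fun S => if h : j ∈ S.1 then 0 else
      ((-1 : ℤ) ^ ((S.1.filter (fun y => y < j)).card)) •
        (x * a ⟨insert j S.1, by rw [Finset.card_insert_of_notMem h, S.2]⟩),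
    funext fun L => ?_⟩
  rw [Kd_apply, hx]
  by_cases hjL : j ∈ L.1
  · -- case j ∈ L : only the l = j term survives
    rw [Finset.sum_eq_single_of_mem j hjL ?_]
    · rw [dif_pos hjL]
      simp only []
      rw [dif_neg (Finset.notMem_erase j L.1)]
      have e1 : a ⟨insert j (L.1.erase j), by
            rw [Finset.card_insert_of_notMem (Finset.notMem_erase j L.1),
              Finset.card_erase_of_mem hjL, L.2]; omega⟩ = a L :=
        congrArg a (Subtype.ext (Finset.insert_erase hjL))
      rw [e1]
      have e2 : ((L.1.erase j).filter (fun y => y < j)).card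
          = (L.1.filter (fun y => y < j)).card := by
        rw [Finset.filter_erase, Finset.erase_eq_of_notMem]
        simp
      rw [e2, smul_smul]
      set c := (L.1.filter (fun y => y < j)).card
      have hsq : ((-1 : A) ^ c) * ((-1 : A) ^ c) = 1 := by
        rw [← pow_add]; exact Even.neg_one_pow ⟨c, rfl⟩
      rw [zsmul_eq_mul]
      push_cast
      linear_combination ((k j : A) * x * a L) * hsq
    · intro l hl hne
      rw [dif_pos hl]
      simp only []
      rw [dif_pos (Finset.mem_erase.mpr ⟨Ne.symm hne, hjL⟩), smul_zero]
  · -- case j ∉ L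
    have hL' : (insert j L.1).card = (i + 1) + 1 := by
      rw [Finset.card_insert_of_notMem hjL, L.2]
    have h0 : Kd k a ⟨insert j L.1, hL'⟩ = 0 := by rw [ha]; rfl
    rw [Kd_apply, Finset.sum_insert hjL] at h0
    set c4 := (L.1.filter (fun y => y < j)).card with hc4
    -- identify the j-term of h0
    have ej : ((-1 : ℤ) ^ ((insert j L.1).filter (fun x => x < j)).card * (k j : ℤ)) •
        (if h : j ∈ insert j L.1 then
          a ⟨(insert j L.1).erase j, by
            rw [Finset.card_erase_of_mem h, hL']; rfl⟩ else 0)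
        = ((-1 : ℤ) ^ c4 * (k j : ℤ)) • a L := by
      rw [dif_pos (Finset.mem_insert_self j L.1)]
      have e1 : a ⟨(insert j L.1).erase j, by
            rw [Finset.card_erase_of_mem (Finset.mem_insert_self j L.1), hL']; rfl⟩ = a L :=
        congrArg a (Subtype.ext (Finset.erase_insert hjL))
      rw [e1]
      congr 2
      rw [Finset.filter_insert, if_neg (lt_irrefl j)]
    rw [ej] at h0
    have hG : ∑ l ∈ L.1,
        ((-1 : ℤ) ^ ((insert j L.1).filter (fun x => x < l)).card * (k l : ℤ)) •
          (if h : l ∈ insert j L.1 then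
            a ⟨(insert j L.1).erase l, by
              rw [Finset.card_erase_of_mem h, hL']; rfl⟩ else 0)
        = -(((-1 : ℤ) ^ c4 * (k j : ℤ)) • a L) :=
      eq_neg_of_add_eq_zero_right h0
    calc (∑ l ∈ L.1,
          ((-1 : ℤ) ^ (L.1.filter (fun x => x < l)).card * (k l : ℤ)) •
            (if h : l ∈ L.1 then
              (fun S : {s : Finset (Fin n) // s.card = i} =>
                if h : j ∈ S.1 then (0 : A) else
                ((-1 : ℤ) ^ ((S.1.filter (fun y => y < j)).card)) •
                  (x * a ⟨insert j S.1, by rw [Finset.card_insert_of_notMem h, S.2]⟩))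
                ⟨L.1.erase l, by rw [Finset.card_erase_of_mem h, L.2]; rfl⟩ else 0))
        = ∑ l ∈ L.1, (-(x * (-1 : A) ^ c4)) *
            (((-1 : ℤ) ^ ((insert j L.1).filter (fun x => x < l)).card * (k l : ℤ)) •
              (if h : l ∈ insert j L.1 then
                a ⟨(insert j L.1).erase l, by
                  rw [Finset.card_erase_of_mem h, hL']; rfl⟩ else 0)) := by
          refine Finset.sum_congr rfl fun l hl => ?_
          have hlj : l ≠ j := fun h => hjL (h ▸ hl)
          rw [dif_pos hl, dif_pos (Finset.mem_insert_of_mem hl)]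
          simp only []
          rw [dif_neg (fun hmem => hjL (Finset.mem_of_mem_erase hmem))]
          -- indices of `a` agree
          have eidx : a ⟨(insert j L.1).erase l, by
                rw [Finset.card_erase_of_mem (Finset.mem_insert_of_mem hl), hL']; rfl⟩
              = a ⟨insert j (L.1.erase l), by
                rw [Finset.card_insert_of_notMem
                  (fun hmem => hjL (Finset.mem_of_mem_erase hmem)),
                  Finset.card_erase_of_mem hl, L.2]; omega⟩ :=
            congrArg a (Subtype.ext (Finset.erase_insert_of_ne (Ne.symm hlj)))
          rw [eidx]
          set T := a ⟨insert j (L.1.erase l), by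
                rw [Finset.card_insert_of_notMem
                  (fun hmem => hjL (Finset.mem_of_mem_erase hmem)),
                  Finset.card_erase_of_mem hl, L.2]; omega⟩
          have hjf : j ∉ L.1.filter (fun y => y < l) := fun h =>
            hjL (Finset.mem_of_mem_filter j h)
          have hsign : ((-1 : A) ^ (L.1.filter (fun y => y < l)).card) *
                ((-1 : A) ^ ((L.1.erase l).filter (fun y => y < j)).card)
              = -(((-1 : A) ^ ((insert j L.1).filter (fun y => y < l)).card) *
                ((-1 : A) ^ (L.1.filter (fun y => y < j)).card)) := by
            rcases lt_or_gt_of_ne hlj with hlt | hgt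
            · have hmem : l ∈ L.1.filter (fun y => y < j) :=
                Finset.mem_filter.mpr ⟨hl, hlt⟩
              have hpos : 0 < (L.1.filter (fun y => y < j)).card :=
                Finset.card_pos.mpr ⟨l, hmem⟩
              have e3 : ((insert j L.1).filter (fun y => y < l)).card
                  = (L.1.filter (fun y => y < l)).card := by
                rw [Finset.filter_insert, if_neg (not_lt.mpr hlt.le)]
              have e2' : ((L.1.erase l).filter (fun y => y < j)).card
                  = (L.1.filter (fun y => y < j)).card - 1 := by
                rw [Finset.filter_erase, Finset.card_erase_of_mem hmem]
              have e2 : (L.1.filter (fun y => y < j)).card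
                  = ((L.1.erase l).filter (fun y => y < j)).card + 1 := by omega
              rw [e3, e2, pow_succ]
              ring
            · have e3 : ((insert j L.1).filter (fun y => y < l)).card
                  = (L.1.filter (fun y => y < l)).card + 1 := by
                rw [Finset.filter_insert, if_pos hgt,
                  Finset.card_insert_of_notMem hjf]
              have e2 : ((L.1.erase l).filter (fun y => y < j)).card
                  = (L.1.filter (fun y => y < j)).card := by
                rw [Finset.filter_erase, Finset.erase_eq_of_notMem]
                intro h
                exact absurd (Finset.mem_filter.mp h).2 (not_lt.mpr hgt.le)
              rw [e3, e2, pow_succ]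
              ring
          rw [smul_smul, zsmul_eq_mul, zsmul_eq_mul]
          push_cast
          linear_combination ((k l : A) * x * T) * hsign
      _ = (-(x * (-1 : A) ^ c4)) * ∑ l ∈ L.1,
            (((-1 : ℤ) ^ ((insert j L.1).filter (fun x => x < l)).card * (k l : ℤ)) •
              (if h : l ∈ insert j L.1 then
                a ⟨(insert j L.1).erase l, by
                  rw [Finset.card_erase_of_mem h, hL']; rfl⟩ else 0)) := by
          rw [Finset.mul_sum]
      _ = (-(x * (-1 : A) ^ c4)) * (-(((-1 : ℤ) ^ c4 * (k j : ℤ)) • a L)) := by rw [hG]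
      _ = (k j : A) * x * a L := by
          have hsq : ((-1 : A) ^ c4) * ((-1 : A) ^ c4) = 1 := by
            rw [← pow_add]; exact Even.neg_one_pow ⟨c4, rfl⟩
          rw [zsmul_eq_mul]
          push_cast
          linear_combination (x * (k j : A) * a L) * hsq
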